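/- Let n = 2 and α ≥ 1. There exists an allocation rule x ∈ T(σ) with value approximation ratio R_V(ρ,x) ≤ α if and only if there is no α-value conflict pair, i.e., if and only if 1/f(ρ₂(s), ρ₁(s′)) ≤ α for all profiles s ≺ s′. -/

import Mathlib

/-! Since `max ρ₁(s) ρ₂(s) = 1`, the requirement `α⁻¹ ≤ x₁ρ₁ + x₂ρ₂` at a profile `s` confines
`x₁(s)` to an interval `[ℓ(s), h(s)]`: each agent must get at least the share `lowerShare` that
compensates for the other agent's ratio. Truthfulness says exactly that `x₁` is monotone along the
reachability steps. A monotone selection from these intervals exists iff `ℓ(s) ≤ h(s')` whenever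
`s` reaches `s'` (take `x₁(s')` to be the largest `ℓ` over the profiles reaching `s'`), and for
`u = ρ₂(s)`, `v = ρ₁(s')` the inequality `ℓ(s) ≤ h(s')` is `α⁻¹(2 - u - v) ≤ 1 - uv`, i.e.
`1 / f(u, v) ≤ α`. -/

namespace Stmt16

variable {k : ℕ}

noncomputable def rho1 (v1 v2 : Fin k × Fin k → ℝ) (s : Fin k × Fin k) : ℝ :=
  v1 s / max (v1 s) (v2 s)

noncomputable def rho2 (v1 v2 : Fin k × Fin k → ℝ) (s : Fin k × Fin k) : ℝ :=
  v2 s / max (v1 s) (v2 s)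

/-- One step of the reachability relation. -/
def step (v1 v2 : Fin k × Fin k → ℝ) (p q : Fin k × Fin k) : Prop :=
  (p.2 = q.2 ∧ v1 p < v1 q) ∨ (p.1 = q.1 ∧ v2 q < v2 p)

/-- The conflict function `f`. -/
noncomputable def conflictF (u v : ℝ) : ℝ :=
  if u = 1 ∧ v = 1 then 1 else (u * v - 1) / (u + v - 2)

/-- Membership in the truthful polytope `T(σ)` (two agents). -/
def InT (v1 v2 x1 x2 : Fin k × Fin k → ℝ) : Prop :=
  (∀ s, 0 ≤ x1 s ∧ x1 s ≤ 1) ∧ (∀ s, 0 ≤ x2 s ∧ x2 s ≤ 1) ∧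
  (∀ s, x1 s + x2 s = 1) ∧
  (∀ a b c : Fin k, v1 (a, c) < v1 (b, c) → x1 (a, c) ≤ x1 (b, c)) ∧
  (∀ a c d : Fin k, v2 (a, c) < v2 (a, d) → x2 (a, c) ≤ x2 (a, d))

open Set Relation

theorem exists_rel_mono_mem_Icc_iff {ι β : Type*} [Fintype ι] [SemilatticeSup β]
    (r : ι → ι → Prop) (lo hi : ι → β) :
    (∃ x : ι → β, (∀ i j, r i j → x i ≤ x j) ∧ ∀ i, x i ∈ Icc (lo i) (hi i)) ↔
      (∀ i, lo i ≤ hi i) ∧ ∀ i j, TransGen r i j → lo i ≤ hi j := by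
  classical
  constructor
  · rintro ⟨x, hmono, hx⟩
    refine ⟨fun i => (hx i).1.trans (hx i).2, fun i j hij => ?_⟩
    have hxij : x i ≤ x j := by
      induction hij with
      | single h => exact hmono _ _ h
      | tail _ h ih => exact ih.trans (hmono _ _ h)
    exact (hx i).1.trans (hxij.trans (hx j).2)
  · rintro ⟨hdiag, hpath⟩
    let x : ι → β := fun j => (Finset.univ.filter (ReflTransGen r · j)).sup'
      ⟨j, Finset.mem_filter.2 ⟨Finset.mem_univ j, .refl⟩⟩ lo
    have le_x : ∀ {i j}, ReflTransGen r i j → lo i ≤ x j := fun h =>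
      Finset.le_sup' lo (by simpa using h)
    refine ⟨x, fun i j hij => ?_, fun j => ⟨le_x .refl, ?_⟩⟩
    · exact Finset.sup'_le _ _ fun l hl => le_x ((by simpa using hl : ReflTransGen r l i).tail hij)
    · refine Finset.sup'_le _ _ fun i hi => ?_
      rcases reflTransGen_iff_eq_or_transGen.1 (by simpa using hi : ReflTransGen r i j) with rfl | h
      · exact hdiag _
      · exact hpath i j h

/-- The least share of the better agent (ratio `1`) for which the mix reaches `α⁻¹` when the other
agent has ratio `r`. At `r = 1` the division by zero makes it `0`, which is the right value. -/
noncomputable def lowerShare (α r : ℝ) : ℝ :=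
  max 0 ((α⁻¹ - r) / (1 - r))

@[simp]
lemma lowerShare_one (α : ℝ) : lowerShare α 1 = 0 := by
  simp [lowerShare]

lemma lowerShare_le_iff {α r t : ℝ} (hα : 1 ≤ α) (hr : r ≤ 1) :
    lowerShare α r ≤ t ↔ 0 ≤ t ∧ α⁻¹ ≤ t + (1 - t) * r := by
  have hα' : α⁻¹ ≤ 1 := inv_le_one_of_one_le₀ hα
  rcases hr.eq_or_lt with rfl | hr
  · simpa using fun _ => hα'
  rw [lowerShare, max_le_iff, div_le_iff₀ (sub_pos.2 hr)]
  constructor <;> rintro ⟨h0, h⟩ <;> exact ⟨h0, by linarith⟩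

lemma lowerShare_le_one {α r : ℝ} (hα : 1 ≤ α) (hr : r ≤ 1) : lowerShare α r ≤ 1 :=
  (lowerShare_le_iff hα hr).2 ⟨zero_le_one, by simpa using inv_le_one_of_one_le₀ hα⟩

lemma mem_Icc_lowerShare_iff {α r₁ r₂ t : ℝ} (hα : 1 ≤ α) (hr₁ : r₁ ≤ 1) (hr₂ : r₂ ≤ 1)
    (hr : r₁ = 1 ∨ r₂ = 1) :
    t ∈ Icc (lowerShare α r₂) (1 - lowerShare α r₁) ↔
      t ∈ Icc 0 1 ∧ α⁻¹ ≤ t * r₁ + (1 - t) * r₂ := by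
  rcases hr with rfl | rfl
  · simp only [mem_Icc, lowerShare_one, sub_zero, mul_one, lowerShare_le_iff hα hr₂]
    tauto
  · simp only [mem_Icc, lowerShare_one, le_sub_comm (a := t), lowerShare_le_iff hα hr₁, mul_one]
    constructor
    · rintro ⟨h0, h1, h⟩; exact ⟨⟨h0, by linarith⟩, by linarith⟩
    · rintro ⟨⟨h0, h1⟩, h⟩; exact ⟨h0, by linarith, by linarith⟩

lemma conflictF_of_eq_one {u v : ℝ} (h : u = 1 ∨ v = 1) : conflictF u v = 1 := by
  by_cases huv : u = 1 ∧ v = 1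
  · simp [conflictF, huv]
  rw [conflictF, if_neg huv]
  rcases h with rfl | rfl
  · rw [one_mul, show 1 + v - 2 = v - 1 by ring, div_self (sub_ne_zero.2 fun hv => huv ⟨rfl, hv⟩)]
  · rw [mul_one, show u + 1 - 2 = u - 1 by ring, div_self (sub_ne_zero.2 fun hu => huv ⟨hu, rfl⟩)]

lemma one_div_conflictF_le_iff {α u v : ℝ} (hα : 1 ≤ α) (hu₀ : 0 ≤ u) (hu : u ≤ 1)
    (hv₀ : 0 ≤ v) (hv : v ≤ 1) :
    1 / conflictF u v ≤ α ↔ lowerShare α u ≤ 1 - lowerShare α v := by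
  by_cases h1 : u = 1 ∨ v = 1
  · rw [conflictF_of_eq_one h1, div_one]
    rcases h1 with rfl | rfl <;> simp [lowerShare_le_one hα, *]
  push Not at h1
  have hu' : 0 < 1 - u := sub_pos.2 (hu.lt_of_ne h1.1)
  have hv' : 0 < 1 - v := sub_pos.2 (hv.lt_of_ne h1.2)
  have hα₀ : 0 < α := zero_lt_one.trans_le hα
  -- after clearing denominators both sides read `α⁻¹ * (2 - u - v) ≤ 1 - u * v`
  have key : (α⁻¹ - u) / (1 - u) + (α⁻¹ - v) / (1 - v) ≤ 1 ↔ 1 / conflictF u v ≤ α := by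
    rw [conflictF, if_neg (fun h => h1.1 h.1), one_div_div, div_add_div _ _ hu'.ne' hv'.ne',
      div_le_one (by positivity), div_le_iff_of_neg (by nlinarith)]
    have : α * α⁻¹ = 1 := mul_inv_cancel₀ hα₀.ne'
    constructor <;> intro h <;> nlinarith
  have hA : (α⁻¹ - u) / (1 - u) ≤ 1 := by
    rw [div_le_one hu']; linarith [inv_le_one_of_one_le₀ hα]
  have hB : (α⁻¹ - v) / (1 - v) ≤ 1 := by
    rw [div_le_one hv']; linarith [inv_le_one_of_one_le₀ hα]
  rw [← key, lowerShare, lowerShare, le_sub_iff_add_le]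
  constructor
  · intro h
    rcases le_total 0 ((α⁻¹ - u) / (1 - u)) with h₁ | h₁ <;>
      rcases le_total 0 ((α⁻¹ - v) / (1 - v)) with h₂ | h₂ <;>
      simp only [max_eq_left, max_eq_right, h₁, h₂] <;> linarith
  · intro h; linarith [le_max_right 0 ((α⁻¹ - u) / (1 - u)), le_max_right 0 ((α⁻¹ - v) / (1 - v))]

lemma sup'_inv_le_iff {ι : Type*} [Fintype ι] [Nonempty ι] {P : ι → ℝ} {α : ℝ}
    (hP : ∀ i, 0 < P i) (hα : 0 < α) :
    Finset.univ.sup' Finset.univ_nonempty (fun i => (P i)⁻¹) ≤ α ↔ ∀ i, α⁻¹ ≤ P i := by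
  simp [Finset.sup'_le_iff, inv_le_comm₀ (hP _) hα]

section Profiles

variable {v1 v2 : Fin k × Fin k → ℝ}

lemma rho1_pos (hv1 : ∀ s, 0 < v1 s) (s : Fin k × Fin k) : 0 < rho1 v1 v2 s :=
  div_pos (hv1 s) (lt_max_of_lt_left (hv1 s))

lemma rho2_pos (hv1 : ∀ s, 0 < v1 s) (hv2 : ∀ s, 0 < v2 s) (s : Fin k × Fin k) :
    0 < rho2 v1 v2 s :=
  div_pos (hv2 s) (lt_max_of_lt_left (hv1 s))

lemma rho1_le_one (hv1 : ∀ s, 0 < v1 s) (s : Fin k × Fin k) : rho1 v1 v2 s ≤ 1 :=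
  div_le_one_of_le₀ (le_max_left _ _) (lt_max_of_lt_left (hv1 s)).le

lemma rho2_le_one (hv1 : ∀ s, 0 < v1 s) (s : Fin k × Fin k) : rho2 v1 v2 s ≤ 1 :=
  div_le_one_of_le₀ (le_max_right _ _) (lt_max_of_lt_left (hv1 s)).le

lemma rho1_eq_one_or_rho2_eq_one (hv1 : ∀ s, 0 < v1 s) (s : Fin k × Fin k) :
    rho1 v1 v2 s = 1 ∨ rho2 v1 v2 s = 1 := by
  rcases max_choice (v1 s) (v2 s) with h | h
  · exact .inl (by rw [rho1, h, div_self (h ▸ lt_max_of_lt_left (hv1 s)).ne'])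
  · exact .inr (by rw [rho2, h, div_self (h ▸ lt_max_of_lt_left (hv1 s)).ne'])

lemma inT_iff {x1 x2 : Fin k × Fin k → ℝ} :
    InT v1 v2 x1 x2 ↔ (∀ s, x1 s + x2 s = 1) ∧ (∀ s, x1 s ∈ Icc 0 1) ∧
      ∀ p q, step v1 v2 p q → x1 p ≤ x1 q := by
  constructor
  · rintro ⟨hx1, -, hsum, hmono1, hmono2⟩
    refine ⟨hsum, hx1, ?_⟩
    rintro ⟨a, c⟩ ⟨b, d⟩ (⟨rfl : c = d, h⟩ | ⟨rfl : a = b, h⟩)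
    · exact hmono1 a b c h
    · linarith [hmono2 a d c h, hsum (a, c), hsum (a, d)]
  · rintro ⟨hsum, hx1, hmono⟩
    refine ⟨hx1, fun s => ⟨?_, ?_⟩, hsum, fun a b c h => hmono _ _ (.inl ⟨rfl, h⟩),
      fun a c d h => ?_⟩
    · linarith [hsum s, (hx1 s).2]
    · linarith [hsum s, (hx1 s).1]
    · linarith [hmono (a, d) (a, c) (.inr ⟨rfl, h⟩), hsum (a, c), hsum (a, d)]

lemma performance_pos {x1 : Fin k × Fin k → ℝ} (hv1 : ∀ s, 0 < v1 s) (hv2 : ∀ s, 0 < v2 s)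
    (hx1 : ∀ s, x1 s ∈ Icc 0 1) (s : Fin k × Fin k) :
    0 < x1 s * rho1 v1 v2 s + (1 - x1 s) * rho2 v1 v2 s := by
  have h1 := mul_nonneg (sub_nonneg.2 (hx1 s).2) (rho2_pos hv1 hv2 s).le
  rcases (hx1 s).1.eq_or_lt with h | h
  · simpa [← h] using rho2_pos hv1 hv2 s
  · exact add_pos_of_pos_of_nonneg (mul_pos h (rho1_pos hv1 s)) h1

theorem exists_truthful_ratio_le_iff [NeZero k] {α : ℝ} (hα : 1 ≤ α)
    (hv1 : ∀ s, 0 < v1 s) (hv2 : ∀ s, 0 < v2 s) :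
    (∃ x1 x2 : Fin k × Fin k → ℝ, InT v1 v2 x1 x2 ∧
      Finset.univ.sup' Finset.univ_nonempty
        (fun s => (x1 s * rho1 v1 v2 s + x2 s * rho2 v1 v2 s)⁻¹) ≤ α) ↔
    ∃ x1 : Fin k × Fin k → ℝ, (∀ p q, step v1 v2 p q → x1 p ≤ x1 q) ∧
      ∀ s, x1 s ∈ Icc (lowerShare α (rho2 v1 v2 s)) (1 - lowerShare α (rho1 v1 v2 s)) := by
  have hfeas (x1 : Fin k × Fin k → ℝ) (s : Fin k × Fin k) :=
    mem_Icc_lowerShare_iff (t := x1 s) hα (rho1_le_one hv1 s) (rho2_le_one hv1 s)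
      (rho1_eq_one_or_rho2_eq_one (v2 := v2) hv1 s)
  have hα₀ : 0 < α := zero_lt_one.trans_le hα
  constructor
  · rintro ⟨x1, x2, hT, hR⟩
    obtain ⟨hsum, hx1, hmono⟩ := inT_iff.1 hT
    obtain rfl : x2 = fun s => 1 - x1 s := funext fun s => eq_sub_of_add_eq' (hsum s)
    have hR := (sup'_inv_le_iff (performance_pos hv1 hv2 hx1) hα₀).1 hR
    exact ⟨x1, hmono, fun s => (hfeas x1 s).2 ⟨hx1 s, hR s⟩⟩
  · rintro ⟨x1, hmono, hx1⟩
    have h s := (hfeas x1 s).1 (hx1 s)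
    have hx01 s := (h s).1
    refine ⟨x1, fun s => 1 - x1 s, inT_iff.2 ⟨fun s => add_sub_cancel _ _, hx01, hmono⟩, ?_⟩
    exact (sup'_inv_le_iff (performance_pos hv1 hv2 hx01) hα₀).2 fun s => (h s).2

end Profiles

/-- with `n = 2`, a truthful allocation rule of value approximation ratio
at most `α` exists iff there is no `α`-value conflict pair. -/
theorem stmt16 (k : ℕ) [NeZero k] (α : ℝ) (hα : 1 ≤ α)
    (v1 v2 : Fin k × Fin k → ℝ)
    (hv1 : ∀ s, 0 < v1 s) (hv2 : ∀ s, 0 < v2 s) :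
    (∃ x1 x2 : Fin k × Fin k → ℝ, InT v1 v2 x1 x2 ∧
      Finset.univ.sup' Finset.univ_nonempty
        (fun s : Fin k × Fin k =>
          (x1 s * rho1 v1 v2 s + x2 s * rho2 v1 v2 s)⁻¹) ≤ α) ↔
    (∀ s s', Relation.TransGen (step v1 v2) s s' →
      1 / conflictF (rho2 v1 v2 s) (rho1 v1 v2 s') ≤ α) := by
  have hconflict (s s' : Fin k × Fin k) :=
    one_div_conflictF_le_iff hα (rho2_pos hv1 hv2 s).le (rho2_le_one hv1 s)
      (rho1_pos (v2 := v2) hv1 s').le (rho1_le_one hv1 s')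
  have hdiag (s : Fin k × Fin k) :
      lowerShare α (rho2 v1 v2 s) ≤ 1 - lowerShare α (rho1 v1 v2 s) := by
    rw [← hconflict, conflictF_of_eq_one (rho1_eq_one_or_rho2_eq_one hv1 s).symm, div_one]
    exact hα
  rw [exists_truthful_ratio_le_iff hα hv1 hv2, exists_rel_mono_mem_Icc_iff, and_iff_right hdiag]
  exact forall₂_congr fun s s' => imp_congr_right fun _ => (hconflict s s').symm

end Stmt16
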